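/- Assume the pair (c, κ) is admissible and λ ∈ (0, π²/(4c²κ)). Then A(a) < 0 for every a ∈ [0, 1−c]. -/

import Mathlib

/-- The threshold `c*` for `κ > 1`. -/
noncomputable def cStar (κ : ℝ) : ℝ :=
  1 / (1 + (2 * Real.sqrt κ / Real.pi) * Real.log ((Real.sqrt κ + 1) / (Real.sqrt κ - 1)))

/-- Admissibility of the pair `(c, κ)`. -/
def Admissible (c κ : ℝ) : Prop :=
  (0 < κ ∧ κ ≤ 1 ∧ 0 < c ∧ c < 1) ∨ (1 < κ ∧ cStar κ < c ∧ c < 1)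

/-- The coefficient `A(a)` of `β₀` in `∂_{β₁} f`. -/
noncomputable def A (c κ lam a : ℝ) : ℝ :=
  -2 * Real.sqrt κ * Real.cos (c * Real.sqrt (κ * lam)) * Real.sinh (Real.sqrt lam * (1 - c))
  + (κ - 1) * Real.sin (c * Real.sqrt (κ * lam)) * Real.cosh (Real.sqrt lam * (1 - c))
  - (κ + 1) * Real.sin (c * Real.sqrt (κ * lam)) * Real.cosh (Real.sqrt lam * (2 * a + c - 1))

/-!
Write `θ = c√(κλ)` and `s = √λ (1 - c)`, so that
`A(a) = -2√κ cos θ sinh s + sin θ ((κ - 1) cosh s - (κ + 1) cosh (√λ (2a + c - 1)))`.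
The bound on `λ` says exactly `θ < π/2`, so the first term is negative and `sin θ > 0`; as
`cosh ≥ 1`, it remains to show `(κ - 1) cosh s < κ + 1`. This is clear for `κ ≤ 1`. For `κ > 1`,
`L = log ((√κ + 1)/(√κ - 1))` satisfies `cosh L = (κ + 1)/(κ - 1)`, and `c* < c` is equivalent to
`(1 - c) π < 2c√κ L`, which together with `θ < π/2` gives `s < L`.
-/

open Real

section LogRatio

variable {κ : ℝ}

lemma one_lt_sqrt_of_one_lt (hκ : 1 < κ) : 1 < √κ :=
  lt_sqrt_of_sq_lt (by simpa using hκ)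

lemma log_sqrt_ratio_pos (hκ : 1 < κ) : 0 < log ((√κ + 1) / (√κ - 1)) := by
  have hs := one_lt_sqrt_of_one_lt hκ
  exact log_pos ((one_lt_div (by linarith)).mpr (by linarith))

lemma cosh_log_sqrt_ratio (hκ : 1 < κ) :
    cosh (log ((√κ + 1) / (√κ - 1))) = (κ + 1) / (κ - 1) := by
  have hs := one_lt_sqrt_of_one_lt hκ
  have hsq : √κ ^ 2 = κ := sq_sqrt (by linarith)
  have h1 : √κ - 1 ≠ 0 := by linarith
  have h2 : √κ + 1 ≠ 0 := by linarith
  have h3 : κ - 1 ≠ 0 := by linarith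
  rw [cosh_log (div_pos (by linarith) (by linarith)), inv_div]
  field_simp
  linear_combination (-4 : ℝ) * hsq

lemma cStar_pos (hκ : 1 < κ) : 0 < cStar κ := by
  have := log_sqrt_ratio_pos hκ
  unfold cStar
  positivity

lemma one_sub_mul_pi_lt_of_cStar_lt {c : ℝ} (hκ : 1 < κ) (hc : cStar κ < c) :
    (1 - c) * π < 2 * c * √κ * log ((√κ + 1) / (√κ - 1)) := by
  have hL := log_sqrt_ratio_pos hκ
  have hden : 0 < 1 + 2 * √κ / π * log ((√κ + 1) / (√κ - 1)) := by positivity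
  rw [cStar, div_lt_iff₀ hden] at hc
  have := mul_lt_mul_of_pos_right hc pi_pos
  field_simp at this
  linarith

end LogRatio

namespace Admissible

variable {c κ : ℝ}

lemma kappa_pos (h : Admissible c κ) : 0 < κ := by
  rcases h with ⟨hκ, -⟩ | ⟨hκ, -⟩ <;> linarith

lemma c_pos (h : Admissible c κ) : 0 < c := by
  rcases h with ⟨-, -, hc, -⟩ | ⟨hκ, hc, -⟩
  · exact hc
  · linarith [cStar_pos hκ]

lemma c_lt_one (h : Admissible c κ) : c < 1 := by
  rcases h with ⟨-, -, -, hc⟩ | ⟨-, -, hc⟩ <;> exact hc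

end Admissible

lemma mul_sqrt_mul_lt_pi_div_two {c κ lam : ℝ} (hc : 0 < c) (hκ : 0 < κ)
    (hlam : lam < π ^ 2 / (4 * c ^ 2 * κ)) : c * √(κ * lam) < π / 2 := by
  rw [lt_div_iff₀ (by positivity)] at hlam
  rw [← sqrt_sq hc.le, ← sqrt_mul (sq_nonneg c), sqrt_lt' (by positivity)]
  linarith

lemma sqrt_mul_one_sub_lt_log {c κ lam : ℝ} (hκ : 1 < κ) (hc : cStar κ < c)
    (hθ : c * √(κ * lam) < π / 2) :
    √lam * (1 - c) < log ((√κ + 1) / (√κ - 1)) := by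
  set L := log ((√κ + 1) / (√κ - 1))
  have hL : 0 < L := log_sqrt_ratio_pos hκ
  refine lt_of_mul_lt_mul_right ?_ pi_pos.le
  calc √lam * (1 - c) * π = √lam * ((1 - c) * π) := by ring
    _ ≤ √lam * (2 * c * √κ * L) :=
        mul_le_mul_of_nonneg_left (one_sub_mul_pi_lt_of_cStar_lt hκ hc).le (sqrt_nonneg _)
    _ = 2 * (c * √(κ * lam)) * L := by rw [sqrt_mul (by linarith)]; ring
    _ < 2 * (π / 2) * L := by gcongr
    _ = L * π := by ring

lemma Admissible.sub_one_mul_cosh_lt {c κ lam : ℝ} (h : Admissible c κ)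
    (hθ : c * √(κ * lam) < π / 2) : (κ - 1) * cosh (√lam * (1 - c)) < κ + 1 := by
  rcases h with ⟨hκ0, hκ1, -, -⟩ | ⟨hκ, hc, hc1⟩
  · have : (κ - 1) * cosh (√lam * (1 - c)) ≤ 0 :=
      mul_nonpos_of_nonpos_of_nonneg (by linarith) (cosh_pos _).le
    linarith
  · have hs : 0 ≤ √lam * (1 - c) := mul_nonneg (sqrt_nonneg _) (by linarith)
    have hcosh : cosh (√lam * (1 - c)) < (κ + 1) / (κ - 1) := by
      rw [← cosh_log_sqrt_ratio hκ, cosh_lt_cosh, abs_of_nonneg hs,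
        abs_of_pos (log_sqrt_ratio_pos hκ)]
      exact sqrt_mul_one_sub_lt_log hκ hc hθ
    calc (κ - 1) * cosh (√lam * (1 - c)) < (κ - 1) * ((κ + 1) / (κ - 1)) := by gcongr
      _ = κ + 1 := mul_div_cancel₀ _ (by linarith)

theorem stmt8 (c κ lam : ℝ) (hadm : Admissible c κ)
    (hlam : lam ∈ Set.Ioo 0 (Real.pi ^ 2 / (4 * c ^ 2 * κ))) :
    ∀ a ∈ Set.Icc (0:ℝ) (1 - c), A c κ lam a < 0 := by
  obtain ⟨hlam0, hlamU⟩ := hlam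
  intro a _
  have hκ := hadm.kappa_pos
  have hθ := mul_sqrt_mul_lt_pi_div_two hadm.c_pos hκ hlamU
  have hθ0 : 0 < c * √(κ * lam) := mul_pos hadm.c_pos (sqrt_pos.mpr (by positivity))
  have hsin := sin_pos_of_pos_of_lt_pi hθ0 (by linarith)
  have hcos := cos_pos_of_mem_Ioo ⟨by linarith, hθ⟩
  have hsinh : 0 < sinh (√lam * (1 - c)) :=
    sinh_pos_iff.mpr (mul_pos (sqrt_pos.mpr hlam0) (by linarith [hadm.c_lt_one]))
  have hcosh : (κ - 1) * cosh (√lam * (1 - c)) < (κ + 1) * cosh (√lam * (2 * a + c - 1)) :=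
    (hadm.sub_one_mul_cosh_lt hθ).trans_le (le_mul_of_one_le_right (by linarith) (one_le_cosh _))
  unfold A
  linarith [mul_pos (mul_pos (mul_pos two_pos (sqrt_pos.mpr hκ)) hcos) hsinh,
    mul_lt_mul_of_pos_left hcosh hsin]
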